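/- Let F : A → (0,∞) and F̂ : Â → (0,∞) be pseudo-Minkowski norms on V and w ∈ V, and suppose F̂ is a translation of F by w, i.e. F(v/F̂(v) − w) = 1 for every v ∈ Â. Let F̃ : −A → (0,∞), F̃(x) = F(−x), be the reverse metric of F, whose Legendre transformation satisfies ℒ_{F̃}(x) = −ℒ_F(−x). Let u ∈ Â, set ξ = ℒ_{F̂}(u), v = u/F̂(u) − w, and μ = F̂(u) − ξ(w), and assume μ < 0 (the reverse case). Then ℒ_{F̃}(μ·v) = ξ and F̃(μ·v) = −μ; consequently the Legendre duals satisfy F̂*(ξ) = −F̃*(ξ) + ξ(w), i.e. F̂(u) = ξ(w) − F̃(μ·v). -/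

import Mathlib

/-- The fundamental tensor of a pseudo-Minkowski norm `F` at `v`. -/
noncomputable def fundTensor {V : Type*} [NormedAddCommGroup V] [NormedSpace ℝ V]
    (F : V → ℝ) (v u w : V) : ℝ :=
  (1 / 2) * deriv (fun t : ℝ => deriv (fun s : ℝ => (F (v + t • u + s • w)) ^ 2) 0) 0

/-- A (conic) pseudo-Minkowski norm on `V` with domain `A`. -/
structure IsPseudoMinkowski {V : Type*} [NormedAddCommGroup V] [NormedSpace ℝ V]
    (A : Set V) (F : V → ℝ) : Prop where
  isOpen : IsOpen A
  zero_not_mem : (0 : V) ∉ A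
  conic : ∀ v ∈ A, ∀ l : ℝ, 0 < l → l • v ∈ A
  smooth : ContDiffOn ℝ (⊤ : ℕ∞) F A
  pos : ∀ v ∈ A, 0 < F v
  homog : ∀ v ∈ A, ∀ l : ℝ, 0 < l → F (l • v) = l * F v
  nondeg : ∀ v ∈ A, ∀ u : V, (∀ w : V, fundTensor F v u w = 0) → u = 0

section helpers
variable {V : Type*} [NormedAddCommGroup V] [NormedSpace ℝ V] {A : Set V} {F : V → ℝ}

lemma pm_diffAt (hF : IsPseudoMinkowski A F) {x : V} (hx : x ∈ A) : DifferentiableAt ℝ F x :=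
  (hF.smooth.contDiffAt (hF.isOpen.mem_nhds hx)).differentiableAt (by simp)

lemma pm_fderiv_smul (hF : IsPseudoMinkowski A F) {x : V} (hx : x ∈ A) {c : ℝ} (hc : 0 < c)
    (z : V) : fderiv ℝ F (c • x) z = fderiv ℝ F x z := by
  have hcx := hF.conic x hx c hc
  have hE : (fun y => c * F y) =ᶠ[nhds x] (fun y => F (c • y)) := by
    filter_upwards [hF.isOpen.mem_nhds hx] with y hy
    exact (hF.homog y hy c hc).symm
  have hinner : HasFDerivAt (fun y : V => c • y) (c • ContinuousLinearMap.id ℝ V) x :=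
    (hasFDerivAt_id x).const_smul c
  have h1 : HasFDerivAt (fun y => F (c • y))
      ((fderiv ℝ F (c • x)).comp (c • ContinuousLinearMap.id ℝ V)) x :=
    (pm_diffAt hF hcx).hasFDerivAt.comp x hinner
  have h2 : HasFDerivAt (fun y => c * F y) (c • fderiv ℝ F x) x :=
    (pm_diffAt hF hx).hasFDerivAt.const_mul c
  have h4 := (h1.congr_of_eventuallyEq hE).unique h2
  have h5 := congrArg (fun L : V →L[ℝ] ℝ => L z) h4
  simp only [ContinuousLinearMap.comp_apply, ContinuousLinearMap.smul_apply,
    ContinuousLinearMap.id_apply, map_smul, smul_eq_mul] at h5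
  exact mul_left_cancel₀ (ne_of_gt hc) h5

lemma pm_euler (hF : IsPseudoMinkowski A F) {x : V} (hx : x ∈ A) :
    fderiv ℝ F x x = F x := by
  have hline : HasDerivAt (fun t : ℝ => x + t • x) x 0 := by
    simpa using ((hasDerivAt_id (0:ℝ)).smul_const x).const_add x
  have hd := (pm_diffAt hF hx).hasFDerivAt
  rw [show x = x + (0:ℝ) • x by simp] at hd
  have h1 : HasDerivAt (fun t : ℝ => F (x + t • x)) (fderiv ℝ F (x + (0:ℝ) • x) x) 0 :=
    hd.comp_hasDerivAt 0 hline
  rw [show x + (0:ℝ) • x = x by simp] at h1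
  have h2 : HasDerivAt (fun t : ℝ => (1 + t) * F x) (F x) 0 := by
    simpa using ((hasDerivAt_id (0:ℝ)).const_add 1).mul_const (F x)
  have hE : (fun t : ℝ => (1 + t) * F x) =ᶠ[nhds (0:ℝ)] (fun t => F (x + t • x)) := by
    filter_upwards [Ioo_mem_nhds (by norm_num : (-1:ℝ) < 0) (by norm_num : (0:ℝ) < 1)] with t ht
    have h1t : 0 < 1 + t := by linarith [ht.1]
    have hx' : x + t • x = (1 + t) • x := by module
    rw [hx', hF.homog x hx _ h1t]
  exact ((h1.congr_of_eventuallyEq hE).unique h2).symm ▸ rfl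

lemma pm_fund (hF : IsPseudoMinkowski A F) {x : V} (hx : x ∈ A) (z : V) :
    fundTensor F x x z = F x * fderiv ℝ F x z := by
  have key : ∀ t : ℝ, 0 < 1 + t →
      deriv (fun s : ℝ => F (x + t • x + s • z) ^ 2) 0
        = (1 + t) * (2 * (F x * fderiv ℝ F x z)) := by
    intro t ht
    have hyx : x + t • x = (1 + t) • x := by module
    have hyA : x + t • x ∈ A := by rw [hyx]; exact hF.conic x hx _ ht
    have hlin : HasDerivAt (fun s : ℝ => (x + t • x) + s • z) z 0 := by
      simpa using ((hasDerivAt_id (0:ℝ)).smul_const z).const_add (x + t • x)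
    have hd := (pm_diffAt hF hyA).hasFDerivAt
    rw [show x + t • x = (x + t • x) + (0:ℝ) • z by simp] at hd
    have hdF : HasDerivAt (fun s : ℝ => F ((x + t • x) + s • z))
        (fderiv ℝ F ((x + t • x) + (0:ℝ) • z) z) 0 := hd.comp_hasDerivAt 0 hlin
    rw [show (x + t • x) + (0:ℝ) • z = x + t • x by simp] at hdF
    have hsq := hdF.pow 2
    have hder := hsq.deriv
    simp only [pow_one, Nat.cast_ofNat, Nat.sub_self, Nat.reduceSub] at hder
    have hF1 : F (x + t • x + (0:ℝ) • z) = (1 + t) * F x := by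
      rw [show x + t • x + (0:ℝ) • z = (1 + t) • x by module]
      exact hF.homog x hx _ ht
    have hF2 : fderiv ℝ F (x + t • x) z = fderiv ℝ F x z := by
      rw [hyx]; exact pm_fderiv_smul hF hx ht z
    rw [show (fun s : ℝ => F (x + t • x + s • z) ^ 2) = (fun s : ℝ => F (x + t • x + s • z)) ^ 2 from rfl,
      hder, hF1, hF2]; ring
  have hout : deriv (fun t : ℝ => deriv (fun s : ℝ => F (x + t • x + s • z) ^ 2) 0) 0
      = deriv (fun t : ℝ => (1 + t) * (2 * (F x * fderiv ℝ F x z))) 0 := by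
    apply Filter.EventuallyEq.deriv_eq
    filter_upwards [Ioo_mem_nhds (by norm_num : (-1:ℝ) < 0) (by norm_num : (0:ℝ) < 1)] with t ht
    exact key t (by linarith [ht.1])
  have hlinK : deriv (fun t : ℝ => (1 + t) * (2 * (F x * fderiv ℝ F x z))) 0
      = 2 * (F x * fderiv ℝ F x z) := by
    have := (((hasDerivAt_id (0:ℝ)).const_add 1).mul_const (2 * (F x * fderiv ℝ F x z))).deriv
    simpa using this
  unfold fundTensor
  rw [hout, hlinK]; ring

end helpers

/-- Reverse case of the dual description of a translation. Suppose `Fh` is a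
translation of `F` by `w`, and let `Ft(x) = F(−x)` (defined on `−A`) be the reverse
metric of `F`, whose Legendre transformation satisfies `ℒ_{Ft}(x) = −ℒ_F(−x)`.
Given `u` in the domain of `Fh`, set `ξ = ℒ_{Fh}(u)`, `v = u/Fh(u) − w` and
`μ = Fh(u) − ξ(w)`, and assume `μ < 0`. Then `μ·v ∈ −A`, `ℒ_{Ft}(μv) = ξ`,
`Ft(μv) = −μ`, and the Legendre duals satisfy `Fh*(ξ) = −Ft*(ξ) + ξ(w)`, i.e.
`Fh(u) = ξ(w) − Ft(μv)`. -/
theorem stmt14 {V : Type*} [NormedAddCommGroup V] [NormedSpace ℝ V] [FiniteDimensional ℝ V]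
    {A Ah : Set V} {F Fh : V → ℝ}
    (hF : IsPseudoMinkowski A F) (hFh : IsPseudoMinkowski Ah Fh) (w : V)
    (htrans : ∀ v ∈ Ah, (Fh v)⁻¹ • v - w ∈ A ∧ F ((Fh v)⁻¹ • v - w) = 1)
    {Ft : V → ℝ} (hFt : ∀ x : V, Ft x = F (-x))
    {u : V} (hu : u ∈ Ah)
    {v : V} (hv : v = (Fh u)⁻¹ • u - w)
    {μ : ℝ} (hμ : μ = Fh u - fundTensor Fh u u w)
    (hμneg : μ < 0) :
    -(μ • v) ∈ A
      ∧ (∀ z : V, fundTensor Ft (μ • v) (μ • v) z = fundTensor Fh u u z)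
      ∧ Ft (μ • v) = -μ
      ∧ Fh u = fundTensor Fh u u w - Ft (μ • v) := by
  obtain ⟨hvA', hFv'⟩ := htrans u hu
  have hvA : v ∈ A := hv ▸ hvA'
  have hFv : F v = 1 := hv ▸ hFv'
  have hc : 0 < Fh u := hFh.pos u hu
  have hc0 : Fh u ≠ 0 := ne_of_gt hc
  set L : V →L[ℝ] ℝ := fderiv ℝ F v with hLdef
  set Lh : V →L[ℝ] ℝ := fderiv ℝ Fh u with hLhdef
  have hξ : ∀ z : V, fundTensor Fh u u z = Fh u * Lh z := fun z => pm_fund hFh hu z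
  have hLv : L v = 1 := by rw [hLdef, pm_euler hF hvA, hFv]
  have hu_eq : u = Fh u • v + Fh u • w := by
    rw [hv, smul_sub, smul_inv_smul₀ hc0]; abel
  have hLu : L u = Fh u * (1 + L w) := by
    conv_lhs => rw [hu_eq]
    rw [map_add, map_smul, map_smul, smul_eq_mul, smul_eq_mul, hLv]; ring
  -- derivative of the translation identity
  have hkey : ∀ z : V, L ((Fh u)⁻¹ • z + (-(Lh z) / (Fh u) ^ 2) • u) = 0 := by
    intro z
    have hlin : HasDerivAt (fun t : ℝ => u + t • z) z 0 := by
      simpa using ((hasDerivAt_id (0:ℝ)).smul_const z).const_add u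
    have hdFh := (pm_diffAt hFh hu).hasFDerivAt
    rw [show u = u + (0:ℝ) • z by simp] at hdFh
    have hα : HasDerivAt (fun t : ℝ => Fh (u + t • z)) (Lh z) 0 := by
      have := hdFh.comp_hasDerivAt 0 hlin
      simpa [hLhdef, Function.comp_def] using this
    have hαinv : HasDerivAt (fun t : ℝ => (Fh (u + t • z))⁻¹) (-(Lh z) / (Fh u) ^ 2) 0 := by
      have := hα.inv (by simpa using hc0)
      simpa [Pi.inv_def] using this
    have hβ : HasDerivAt (fun t : ℝ => (Fh (u + t • z))⁻¹ • (u + t • z) - w)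
        ((Fh u)⁻¹ • z + (-(Lh z) / (Fh u) ^ 2) • u) 0 := by
      have h0 := (hαinv.smul hlin).sub_const w
      simp only [zero_smul, add_zero] at h0
      exact h0
    have hdF := (pm_diffAt hF hvA).hasFDerivAt
    rw [show v = (Fh (u + (0:ℝ) • z))⁻¹ • (u + (0:ℝ) • z) - w by simp [hv]] at hdF
    have hγ : HasDerivAt (fun t : ℝ => F ((Fh (u + t • z))⁻¹ • (u + t • z) - w))
        (L ((Fh u)⁻¹ • z + (-(Lh z) / (Fh u) ^ 2) • u)) 0 := by
      have := hdF.comp_hasDerivAt 0 hβ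
      simpa [hLdef, hv, Function.comp_def] using this
    have hconst : HasDerivAt (fun t : ℝ => F ((Fh (u + t • z))⁻¹ • (u + t • z) - w)) 0 0 := by
      have hmem : ∀ᶠ t : ℝ in nhds 0, u + t • z ∈ Ah := by
        have hcont : Continuous (fun t : ℝ => u + t • z) :=
          continuous_const.add (continuous_id.smul continuous_const)
        have : u + (0:ℝ) • z ∈ Ah := by simpa using hu
        exact hcont.continuousAt.eventually_mem (hFh.isOpen.mem_nhds this)
      have hEq : (fun t : ℝ => F ((Fh (u + t • z))⁻¹ • (u + t • z) - w))
          =ᶠ[nhds (0:ℝ)] (fun _ => (1:ℝ)) := by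
        filter_upwards [hmem] with t ht using (htrans _ ht).2
      exact (hasDerivAt_const (0:ℝ) (1:ℝ)).congr_of_eventuallyEq hEq
    exact hγ.unique hconst
  have hRel : ∀ z : V, L z = Lh z * (1 + L w) := by
    intro z
    have h := hkey z
    rw [map_add, map_smul, map_smul, smul_eq_mul, smul_eq_mul, hLu] at h
    field_simp at h
    have h2 : L z * Fh u ^ 2 = (Lh z * (1 + L w)) * Fh u ^ 2 := by linear_combination (Fh u ^ 2) * h
    exact mul_right_cancel₀ (pow_ne_zero 2 hc0) h2
  have ha : L w = Lh w * (1 + L w) := hRel w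
  have hμ' : μ = Fh u - Fh u * Lh w := by rw [hμ, hξ w]
  have hν : 0 < -μ := neg_pos.mpr hμneg
  have hνvA : (-μ) • v ∈ A := hF.conic v hvA _ hν
  have hFt3 : Ft (μ • v) = -μ := by
    rw [hFt, show -(μ • v) = (-μ) • v by module, hF.homog v hvA _ hν, hFv, mul_one]
  refine ⟨by rwa [show -(μ • v) = (-μ) • v by module], ?_, hFt3, ?_⟩
  · intro z
    have hstep : fundTensor Ft (μ • v) (μ • v) z
        = fundTensor F ((-μ) • v) ((-μ) • v) (-z) := by
      have harg : ∀ t s : ℝ, -(μ • v + t • (μ • v) + s • z)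
          = (-μ) • v + t • ((-μ) • v) + s • (-z) := by intro t s; module
      unfold fundTensor
      have hfun : (fun t : ℝ => deriv (fun s : ℝ => Ft (μ • v + t • (μ • v) + s • z) ^ 2) 0)
          = (fun t : ℝ =>
              deriv (fun s : ℝ => F ((-μ) • v + t • ((-μ) • v) + s • (-z)) ^ 2) 0) := by
        funext t
        congr 1
        funext s
        rw [hFt, harg t s]
      rw [hfun]
    rw [hstep, pm_fund hF hνvA (-z), hF.homog v hvA _ hν,
      show fderiv ℝ F ((-μ) • v) (-z) = fderiv ℝ F v (-z) from pm_fderiv_smul hF hvA hν (-z),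
      ← hLdef, map_neg, hξ z, hFv]
    have hLz := hRel z
    have h1 : (1 - Lh w) * (1 + L w) = 1 := by linear_combination ha
    rw [hLz, hμ']
    linear_combination (Fh u * Lh z) * h1
  · rw [hFt3, hμ]; ring
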